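/- Let G be a finite group, T a positive integer, and 0 < δ ≤ 1/|G|. Let s(t), t = 0,1,2,..., be vectors of convex weights on G satisfying: for every t, the composite convex weight vector q(t,T) = s(t+T−1) ∗ ⋯ ∗ s(t) satisfies q(t,T)(g) > δ for all g ∈ G. Let p(t) evolve as p(t+1) = s(t) ∗ p(t) from any initial vector of convex weights p(0), and let p̂(g) = 1/|G|. Then p(t) converges to p̂ as t → ∞, with the explicit exponential bound ‖p(t) − p̂‖ ≤ √|G| · (1 − |G|δ)^{⌊t/T⌋} for all t, where ‖·‖ is the Euclidean norm on ℝ^G. -/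

import Mathlib

/-- A vector of convex weights on a finite type: nonnegative entries summing to 1. -/
def IsConvexWeights {G : Type*} [Fintype G] (s : G → ℝ) : Prop :=
  (∀ g, 0 ≤ s g) ∧ ∑ g, s g = 1

/-- Group convolution of weight vectors: `(s ∗ p)(g) = ∑ h, s(h) p(h⁻¹ g)`. -/
def groupConv {G : Type*} [Group G] [Fintype G] (s p : G → ℝ) : G → ℝ :=
  fun g => ∑ h : G, s h * p (h⁻¹ * g)

/-- The composite weights describing the evolution from time `t` to `t + T`:
`compWeights s t T = s(t+T−1) ∗ ⋯ ∗ s(t+1) ∗ s(t)` (the empty composite, `T = 0`,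
is the delta distribution at the identity). -/
def compWeights {G : Type*} [Group G] [Fintype G] [DecidableEq G]
    (s : ℕ → G → ℝ) (t : ℕ) : ℕ → G → ℝ
  | 0 => fun g => if g = 1 then 1 else 0
  | T + 1 => groupConv (s (t + T)) (compWeights s t T)


/-! Convolution with convex weights never increases the Euclidean distance to the uniform vector,
since it fixes the uniform vector and `‖s ∗ e‖₂ ≤ ‖s‖₁ ‖e‖₂` (Cauchy–Schwarz). Over a block of `T`
steps the composite weights `q` exceed `δ` everywhere; as the deviation `p - p̂` has zero sum,
`q` may be replaced by `q - δ`, of mass `1 - |G| δ`, so each block contracts the distance by that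
factor. The initial distance is at most `√|G|`. -/

open Finset Filter Topology

section groupConv

variable {G : Type*} [Group G] [Fintype G]

theorem sum_groupConv (s p : G → ℝ) : ∑ g, groupConv s p g = (∑ h, s h) * ∑ g, p g := by
  simp only [groupConv]
  rw [sum_comm, sum_mul]
  refine sum_congr rfl fun h _ => ?_
  rw [← mul_sum]
  exact congrArg _ (Fintype.sum_equiv (Equiv.mulLeft h⁻¹) _ _ fun _ => rfl)

theorem groupConv_assoc (a b c : G → ℝ) :
    groupConv (groupConv a b) c = groupConv a (groupConv b c) := by
  funext g
  simp only [groupConv, sum_mul, mul_sum]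
  rw [sum_comm]
  refine sum_congr rfl fun k _ => Fintype.sum_equiv (Equiv.mulLeft k⁻¹) _ _ fun m => ?_
  simp [mul_assoc]

theorem groupConv_delta_left [DecidableEq G] (p : G → ℝ) :
    groupConv (fun g => if g = 1 then 1 else 0) p = p := by
  funext g
  simp [groupConv, ite_mul]

theorem groupConv_sub_const_right (s p : G → ℝ) (c : ℝ) (g : G) :
    groupConv s (fun x => p x - c) g = groupConv s p g - (∑ h, s h) * c := by
  simp only [groupConv, mul_sub, sum_sub_distrib, sum_mul]

theorem groupConv_sub_const_left (q e : G → ℝ) (c : ℝ) (g : G) :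
    groupConv (fun h => q h - c) e g = groupConv q e g - c * ∑ x, e x := by
  simp only [groupConv, sub_mul, sum_sub_distrib, ← mul_sum]
  congr 2
  exact Fintype.sum_equiv ((Equiv.inv G).trans (Equiv.mulRight g)) _ _ fun _ => rfl

theorem IsConvexWeights.groupConv {s p : G → ℝ} (hs : IsConvexWeights s)
    (hp : IsConvexWeights p) : IsConvexWeights (groupConv s p) :=
  ⟨fun _ => sum_nonneg fun h _ => mul_nonneg (hs.1 h) (hp.1 _),
    by rw [sum_groupConv, hs.2, hp.2, one_mul]⟩

theorem sum_sq_groupConv_le {s : G → ℝ} (hs : ∀ g, 0 ≤ s g) (e : G → ℝ) :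
    ∑ g, groupConv s e g ^ 2 ≤ (∑ h, s h) ^ 2 * ∑ g, e g ^ 2 := by
  have cauchySchwarz : ∀ g, groupConv s e g ^ 2 ≤ (∑ h, s h) * ∑ h, s h * e (h⁻¹ * g) ^ 2 :=
    fun g => sum_sq_le_sum_mul_sum_of_sq_le_mul _ (fun h _ => hs h)
      (fun h _ => mul_nonneg (hs h) (sq_nonneg _)) fun h _ => by nlinarith
  calc ∑ g, groupConv s e g ^ 2
        ≤ (∑ h, s h) * ∑ g, groupConv s (fun x => e x ^ 2) g := by
          rw [mul_sum]
          exact sum_le_sum fun g _ => cauchySchwarz g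
    _ = (∑ h, s h) ^ 2 * ∑ g, e g ^ 2 := by rw [sum_groupConv]; ring

/-- On the zero-sum deviation `p - 1/|G|` the weights `q` act as `q - δ`, whose mass is
`1 - |G| δ`. -/
theorem sum_sq_groupConv_sub_inv_card_le {q p : G → ℝ} {δ : ℝ} (hq : ∑ h, q h = 1)
    (hqδ : ∀ h, δ ≤ q h) (hp : ∑ g, p g = 1) :
    ∑ g, (groupConv q p g - 1 / Fintype.card G) ^ 2
      ≤ (1 - Fintype.card G * δ) ^ 2 * ∑ g, (p g - 1 / Fintype.card G) ^ 2 := by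
  set n : ℝ := (Fintype.card G : ℝ)
  set e : G → ℝ := fun g => p g - 1 / n
  have he : ∑ g, e g = 0 := by
    have : n ≠ 0 := Nat.cast_ne_zero.2 Fintype.card_ne_zero
    simp [e, sum_sub_distrib, hp, n, this]
  have hconv : ∀ g, groupConv q p g - 1 / n = groupConv (fun h => q h - δ) e g := fun g => by
    rw [groupConv_sub_const_left, he, mul_zero, sub_zero, groupConv_sub_const_right, hq,
      one_mul]
  have hmass : ∑ h, (q h - δ) = 1 - n * δ := by simp [sum_sub_distrib, hq, n]
  simp_rw [hconv]
  simpa only [hmass] using sum_sq_groupConv_le (fun h => sub_nonneg.2 (hqδ h)) e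

theorem IsConvexWeights.sum_sq_sub_inv_card_le {p : G → ℝ} (hp : IsConvexWeights p) :
    ∑ g, (p g - 1 / Fintype.card G) ^ 2 ≤ (Fintype.card G : ℝ) := by
  have hn : (1 : ℝ) ≤ Fintype.card G := Nat.one_le_cast.2 Fintype.card_pos
  have hterm : ∀ g, (p g - 1 / Fintype.card G) ^ 2 ≤ 1 := fun g => by
    have hpg : p g ≤ 1 := hp.2 ▸ single_le_sum (fun g _ => hp.1 g) (mem_univ g)
    have : 1 / (Fintype.card G : ℝ) ≤ 1 := div_le_one_of_le₀ hn (by positivity)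
    nlinarith [hp.1 g, show (0 : ℝ) ≤ 1 / Fintype.card G by positivity]
  simpa using sum_le_sum fun g (_ : g ∈ univ) => hterm g

variable [DecidableEq G]

theorem isConvexWeights_compWeights {s : ℕ → G → ℝ} (hs : ∀ t, IsConvexWeights (s t))
    (t T : ℕ) : IsConvexWeights (compWeights s t T) := by
  induction T with
  | zero =>
    exact ⟨fun g => by dsimp only [compWeights]; split_ifs <;> norm_num, by simp [compWeights]⟩
  | succ T ih => exact (hs (t + T)).groupConv ih

theorem eq_groupConv_compWeights {s p : ℕ → G → ℝ}
    (hstep : ∀ t, p (t + 1) = groupConv (s t) (p t)) (t T : ℕ) :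
    p (t + T) = groupConv (compWeights s t T) (p t) := by
  induction T with
  | zero => exact (groupConv_delta_left _).symm
  | succ T ih => rw [← add_assoc, hstep, ih, compWeights, groupConv_assoc]

end groupConv

theorem Antitone.le_pow_div_mul {F : ℕ → ℝ} (hF : Antitone F) {T : ℕ} {r : ℝ} (hr : 0 ≤ r)
    (hstep : ∀ t, F (t + T) ≤ r * F t) (t : ℕ) : F t ≤ r ^ (t / T) * F 0 := by
  have hblocks : ∀ k, F (T * k) ≤ r ^ k * F 0 := by
    intro k
    induction k with
    | zero => simp
    | succ k ih =>
      calc F (T * (k + 1)) = F (T * k + T) := by rw [mul_add_one]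
        _ ≤ r * F (T * k) := hstep _
        _ ≤ r * (r ^ k * F 0) := by gcongr
        _ = r ^ (k + 1) * F 0 := by ring
  exact (hF (Nat.mul_div_le t T)).trans (hblocks _)

theorem tendsto_mul_pow_div_atTop_nhds_zero {c : ℝ} (hc0 : 0 ≤ c) (hc1 : c < 1) {T : ℕ}
    (hT : T ≠ 0) (B : ℝ) : Tendsto (fun t : ℕ => B * c ^ (t / T)) atTop (𝓝 0) := by
  simpa using ((tendsto_pow_atTop_nhds_zero_of_lt_one hc0 hc1).comp
    (Nat.tendsto_div_const_atTop hT)).const_mul B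

theorem exponential_convergence_to_uniform_general
    {G : Type*} [Group G] [Fintype G] [DecidableEq G]
    (T : ℕ) (hT : 0 < T)
    (δ : ℝ) (hδ0 : 0 < δ)
    (s : ℕ → G → ℝ) (hs : ∀ t, IsConvexWeights (s t))
    (hq : ∀ (t : ℕ) (g : G), δ < compWeights s t T g)
    (p : ℕ → G → ℝ) (hp0 : IsConvexWeights (p 0))
    (hstep : ∀ t, p (t + 1) = groupConv (s t) (p t)) :
    (∀ g : G, Filter.Tendsto (fun t => p t g) Filter.atTop
        (nhds (1 / (Fintype.card G : ℝ))))
    ∧ ∀ t : ℕ,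
        Real.sqrt (∑ g : G, (p t g - 1 / (Fintype.card G : ℝ)) ^ 2)
          ≤ Real.sqrt (Fintype.card G)
              * (1 - (Fintype.card G : ℝ) * δ) ^ (t / T) := by
  set n : ℝ := (Fintype.card G : ℝ)
  set c : ℝ := 1 - n * δ
  set F : ℕ → ℝ := fun t => ∑ g, (p t g - 1 / n) ^ 2
  have hp : ∀ t, IsConvexWeights (p t) :=
    Nat.rec hp0 fun t ih => hstep t ▸ (hs t).groupConv ih
  have hanti : Antitone F := antitone_nat_of_succ_le fun t => by
    simpa [F, hstep] using sum_sq_groupConv_sub_inv_card_le (hs t).2 (hs t).1 (hp t).2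
  have hblock : ∀ t, F (t + T) ≤ c ^ 2 * F t := fun t => by
    simpa only [F, eq_groupConv_compWeights hstep] using sum_sq_groupConv_sub_inv_card_le
      (isConvexWeights_compWeights hs t T).2 (fun g => (hq t g).le) (hp t).2
  -- `c ≥ 0` because the composite weights, of total mass one, exceed `δ` everywhere.
  have hc0 : 0 ≤ c := by
    have := sum_lt_sum_of_nonempty univ_nonempty fun g (_ : g ∈ univ) => hq 0 g
    simp only [(isConvexWeights_compWeights hs 0 T).2, sum_const, card_univ, nsmul_eq_mul] at this
    linarith
  have hc1 : c < 1 := by simpa [c] using mul_pos (by positivity : (0 : ℝ) < n) hδ0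
  have hbound : ∀ t, √(F t) ≤ √n * c ^ (t / T) := fun t => calc
    √(F t) ≤ √((c ^ 2) ^ (t / T) * n) := Real.sqrt_le_sqrt <|
        (hanti.le_pow_div_mul (sq_nonneg c) hblock t).trans
          (by gcongr; exact (hp 0).sum_sq_sub_inv_card_le)
    _ = √n * c ^ (t / T) := by
        rw [← pow_mul, pow_mul', Real.sqrt_mul (sq_nonneg _), Real.sqrt_sq (pow_nonneg hc0 _),
          mul_comm]
  refine ⟨fun g => tendsto_sub_nhds_zero_iff.1 (squeeze_zero_norm (fun t => ?_)
    (tendsto_mul_pow_div_atTop_nhds_zero hc0 hc1 hT.ne' √n)), hbound⟩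
  exact (Real.abs_le_sqrt (single_le_sum (f := fun g => (p t g - 1 / n) ^ 2)
    (fun g _ => sq_nonneg _) (mem_univ g))).trans (hbound t)

theorem exponential_convergence_to_uniform
    {G : Type*} [Group G] [Fintype G] [DecidableEq G]
    (T : ℕ) (hT : 0 < T)
    (δ : ℝ) (hδ0 : 0 < δ) (hδ1 : δ ≤ 1 / (Fintype.card G : ℝ))
    (s : ℕ → G → ℝ) (hs : ∀ t, IsConvexWeights (s t))
    (hq : ∀ (t : ℕ) (g : G), δ < compWeights s t T g)
    (p : ℕ → G → ℝ) (hp0 : IsConvexWeights (p 0))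
    (hstep : ∀ t, p (t + 1) = groupConv (s t) (p t)) :
    (∀ g : G, Filter.Tendsto (fun t => p t g) Filter.atTop
        (nhds (1 / (Fintype.card G : ℝ))))
    ∧ ∀ t : ℕ,
        Real.sqrt (∑ g : G, (p t g - 1 / (Fintype.card G : ℝ)) ^ 2)
          ≤ Real.sqrt (Fintype.card G)
              * (1 - (Fintype.card G : ℝ) * δ) ^ (t / T) :=
  exponential_convergence_to_uniform_general T hT δ hδ0 s hs hq p hp0 hstep
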